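/- Let Λ be a lattice (a discrete cocompact additive subgroup) in ℂ³ ≅ ℝ⁶, and let Re : ℂ³ → ℝ³ be the projection onto real parts. Then Re(Λ) contains an ℝ-basis of ℝ³; moreover Re(Λ) is closed in ℝ³ (equivalently, is a lattice in ℝ³) if and only if Λ ∩ iℝ³ contains three ℝ-linearly independent elements, i.e., Λ ∩ ker(Re) spans ker(Re) over ℝ. -/

import Mathlib

open Submodule Set Metric Module

/-- Componentwise real part `ℂ³ → ℝ³`. -/
def reMap (z : Fin 3 → ℂ) : Fin 3 → ℝ := fun i => (z i).re

section Aux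

/-- `reMap` as an `ℝ`-linear map. -/
noncomputable def fre : (Fin 3 → ℂ) →ₗ[ℝ] (Fin 3 → ℝ) where
  toFun z := fun i => (z i).re
  map_add' := by intros; funext i; simp
  map_smul' := by intros; funext i; simp

/-- The canonical real section `ℝ³ → ℂ³`. -/
noncomputable def gim : (Fin 3 → ℝ) →ₗ[ℝ] (Fin 3 → ℂ) where
  toFun r := fun i => (r i : ℂ)
  map_add' := by intros; funext i; simp
  map_smul' := by intros; funext i; simp [Complex.ofReal_mul]

lemma fre_gim (r : Fin 3 → ℝ) : fre (gim r) = r := by funext i; simp [fre, gim]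

lemma fre_surj : Function.Surjective fre := fun r => ⟨gim r, fre_gim r⟩

lemma finrank_dom : finrank ℝ (Fin 3 → ℂ) = 6 := by
  simp [finrank_pi_fintype, Complex.finrank_real_complex]

lemma finrank_ker_fre : finrank ℝ (LinearMap.ker fre) = 3 := by
  have h := LinearMap.finrank_range_add_finrank_ker fre
  rw [LinearMap.range_eq_top.mpr fre_surj, finrank_top, finrank_dom] at h
  simp at h; omega

lemma gim_norm_le (r : Fin 3 → ℝ) : ‖gim r‖ ≤ ‖r‖ := by
  refine (pi_norm_le_iff_of_nonneg (norm_nonneg r)).mpr fun i => ?_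
  simpa [gim] using norm_le_pi_norm r i

lemma exists_indep_sub {E : Type*} [AddCommGroup E] [Module ℝ E] [FiniteDimensional ℝ E]
    (s : Set E) (n : ℕ) (h : n ≤ finrank ℝ (span ℝ s)) :
    ∃ v : Fin n → E, (∀ i, v i ∈ s) ∧ LinearIndependent ℝ v := by
  obtain ⟨t, hts, hspan, hli⟩ := exists_linearIndependent ℝ s
  have htfin : t.Finite := hli.setFinite
  haveI : Fintype t := htfin.fintype
  have hcard : finrank ℝ (span ℝ t) = t.toFinset.card := finrank_span_set_eq_card hli
  rw [hspan] at hcard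
  have hn : n ≤ Fintype.card t := by rw [← Set.toFinset_card]; omega
  let e : Fin n ↪ t := (Fin.castLEEmb (by simpa using hn)).trans
    (Fintype.equivFin t).symm.toEmbedding
  exact ⟨fun i => (e i : E), fun i => hts (e i).2, hli.comp e e.injective⟩

/-- If the image of a discrete lattice contains three independent "purely imaginary"
directionsworth of kernel vectors, the image is uniformly separated from `0`. -/
lemma sep_lemma (L : Submodule ℤ (Fin 3 → ℂ)) [DiscreteTopology L]
    (w : Fin 3 → (Fin 3 → ℂ)) (hwL : ∀ i, w i ∈ L) (hwk : ∀ i, w i ∈ LinearMap.ker fre)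
    (hli : LinearIndependent ℝ w) :
    ∃ ε > 0, ∀ y ∈ ⇑fre '' (L : Set (Fin 3 → ℂ)), ‖y‖ < ε → y = 0 := by
  classical
  haveI : DiscreteTopology L.toAddSubgroup := ‹DiscreteTopology L›
  have hclosedL : IsClosed (L : Set (Fin 3 → ℂ)) := by
    have : IsClosed (L.toAddSubgroup : Set (Fin 3 → ℂ)) := AddSubgroup.isClosed_of_discrete
    exact this
  set P := LinearMap.ker fre with hP
  let w' : Fin 3 → P := fun i => ⟨w i, hwk i⟩
  have hli' : LinearIndependent ℝ w' := by
    apply LinearIndependent.of_comp P.subtype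
    convert hli
    rfl
  let bP : Basis (Fin 3) ℝ P := basisOfLinearIndependentOfCardEqFinrank hli'
    finrank_ker_fre.symm
  obtain ⟨C, hC⟩ := isBounded_iff_forall_norm_le.mp
    (ZSpan.fundamentalDomain_isBounded bP)
  have key : ∀ x ∈ (L : Set (Fin 3 → ℂ)), ‖fre x‖ ≤ 1 →
      ∃ x' ∈ (L : Set (Fin 3 → ℂ)) ∩ closedBall 0 (C + 1), fre x' = fre x := by
    intro x hx hfx
    have hu : x - gim (fre x) ∈ P := by
      simp [hP, LinearMap.mem_ker, map_sub, fre_gim]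
    obtain ⟨v, hv, -⟩ := ZSpan.exist_unique_vadd_mem_fundamentalDomain bP ⟨x - gim (fre x), hu⟩
    have hvmem : ((v : P) : Fin 3 → ℂ) ∈ L := by
      have hv2 := v.2
      have hcoe : ⇑bP = w' := coe_basisOfLinearIndependentOfCardEqFinrank _ _
      refine Submodule.span_induction (p := fun (u : P) _ => (u : Fin 3 → ℂ) ∈ L)
        ?_ ?_ ?_ ?_ hv2
      · rintro u ⟨i, rfl⟩; rw [hcoe]; exact hwL i
      · simp
      · intro a b _ _ ha hb; simpa using L.add_mem ha hb
      · intro n a _ ha; simpa using L.smul_mem n ha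
    have hnorm : ‖((v : P) : Fin 3 → ℂ) + (x - gim (fre x))‖ ≤ C := by
      have := hC _ hv
      exact this
    refine ⟨x + (v : P), ⟨L.add_mem hx hvmem, ?_⟩, ?_⟩
    · rw [mem_closedBall_zero_iff]
      have heq : x + ((v : P) : Fin 3 → ℂ) =
          gim (fre x) + (((v : P) : Fin 3 → ℂ) + (x - gim (fre x))) := by ring
      rw [heq]
      calc ‖_ + _‖ ≤ ‖gim (fre x)‖ + ‖((v : P) : Fin 3 → ℂ) + (x - gim (fre x))‖ :=
            norm_add_le _ _
        _ ≤ ‖fre x‖ + C := add_le_add (gim_norm_le _) hnorm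
        _ ≤ 1 + C := by linarith
        _ = C + 1 := by ring
    · have : fre ((v : P) : Fin 3 → ℂ) = 0 := (v : P).2
      simp [map_add, this]
  set F := (L : Set (Fin 3 → ℂ)) ∩ closedBall 0 (C + 1) with hF
  have hFfin : F.Finite := by
    haveI hd : DiscreteTopology ((L : Set (Fin 3 → ℂ)) : Type _) := ‹DiscreteTopology L›
    haveI : DiscreteTopology F := hd.of_subset Set.inter_subset_left
    exact ((isCompact_closedBall 0 (C + 1)).inter_left hclosedL).finite (isDiscrete_iff_discreteTopology.mpr ‹_›)
  have hTfin : (⇑fre '' F).Finite := hFfin.image _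
  set Tn := hTfin.toFinset.filter (fun y => y ≠ 0) with hTn
  set ε : ℝ := if h : Tn.Nonempty then min 1 (Tn.inf' h (fun y => ‖y‖)) else 1 with hε
  have hε1 : ε ≤ 1 := by
    rw [hε]; split
    · exact min_le_left _ _
    · exact le_rfl
  have hεpos : 0 < ε := by
    rw [hε]; split
    · refine lt_min one_pos ?_
      rw [Finset.lt_inf'_iff]
      intro y hy
      rw [hTn, Finset.mem_filter] at hy
      exact norm_pos_iff.mpr hy.2
    · exact one_pos
  refine ⟨ε, hεpos, ?_⟩
  rintro y ⟨x, hx, rfl⟩ hy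
  by_contra hne
  obtain ⟨x', hx'F, hx'e⟩ := key x hx (le_trans hy.le hε1)
  have hmem : fre x ∈ Tn := by
    rw [hTn, Finset.mem_filter, Set.Finite.mem_toFinset]
    exact ⟨⟨x', hx'F, hx'e⟩, hne⟩
  have : ε ≤ ‖fre x‖ := by
    rw [hε, dif_pos ⟨fre x, hmem⟩]
    exact le_trans (min_le_right _ _) (Finset.inf'_le _ hmem)
  linarith

lemma discrete_of_sep (G : Submodule ℤ (Fin 3 → ℝ))
    (h : ∃ ε > 0, ∀ y ∈ G, ‖y‖ < ε → y = 0) : DiscreteTopology G := by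
  refine discreteTopology_iff_isOpen_singleton_zero.mpr ?_
  obtain ⟨ε, hε, hsep⟩ := h
  have heq : ({0} : Set G) = (Subtype.val : G → (Fin 3 → ℝ)) ⁻¹' (ball 0 ε) := by
    ext y
    simp only [Set.mem_singleton_iff, Set.mem_preimage, mem_ball_zero_iff]
    exact ⟨by rintro rfl; simpa using hε, fun hy => Subtype.ext (hsep y.1 y.2 hy)⟩
  rw [heq]
  exact isOpen_ball.preimage continuous_subtype_val

lemma isClosed_of_disc (G : Submodule ℤ (Fin 3 → ℝ)) [DiscreteTopology G] :
    IsClosed (G : Set (Fin 3 → ℝ)) := by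
  haveI : DiscreteTopology G.toAddSubgroup := ‹DiscreteTopology G›
  have : IsClosed (G.toAddSubgroup : Set (Fin 3 → ℝ)) := AddSubgroup.isClosed_of_discrete
  exact this

/-- A closed countable subgroup of `ℝ³` is uniformly separated from `0` (Baire). -/
lemma sep_of_closed_countable (G : Submodule ℤ (Fin 3 → ℝ))
    (hcl : IsClosed (G : Set (Fin 3 → ℝ))) (hcnt : (G : Set (Fin 3 → ℝ)).Countable) :
    ∃ ε > 0, ∀ y ∈ G, ‖y‖ < ε → y = 0 := by
  haveI : CompleteSpace (G : Set (Fin 3 → ℝ)) := hcl.completeSpace_coe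
  haveI : Countable (G : Set (Fin 3 → ℝ)) := hcnt.to_subtype
  haveI : Nonempty (G : Set (Fin 3 → ℝ)) := ⟨⟨0, G.zero_mem⟩⟩
  obtain ⟨x₀, hx₀⟩ := nonempty_interior_of_iUnion_of_closed
    (f := fun x : (G : Set (Fin 3 → ℝ)) => ({x} : Set (G : Set (Fin 3 → ℝ))))
    (fun _ => isClosed_singleton) (by rw [Set.iUnion_of_singleton])
  obtain ⟨z, hz⟩ := hx₀
  have hz0 : z = x₀ := Set.mem_singleton_iff.mp (interior_subset hz)
  subst hz0
  have hopen : IsOpen ({z} : Set (G : Set (Fin 3 → ℝ))) := by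
    have h1 : interior ({z} : Set (G : Set (Fin 3 → ℝ))) = {z} :=
      Set.Subset.antisymm interior_subset (Set.singleton_subset_iff.mpr hz)
    rw [← h1]; exact isOpen_interior
  obtain ⟨ε, hε, hball⟩ := Metric.isOpen_iff.mp hopen z rfl
  refine ⟨ε, hε, fun y hy hny => ?_⟩
  have hmem : (⟨z.1 + y, G.add_mem z.2 hy⟩ : (G : Set (Fin 3 → ℝ))) ∈ ball z ε := by
    rw [mem_ball, Subtype.dist_eq]
    simpa [dist_eq_norm] using hny
  have := hball hmem
  rw [Set.mem_singleton_iff, Subtype.ext_iff] at this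
  have h2 : z.1 + y = z.1 := this
  exact add_eq_left.mp h2

/-- If the image lattice is separated, the kernel intersection is big. -/
lemma exists_w (L : Submodule ℤ (Fin 3 → ℂ)) (hspanL : span ℝ (L : Set (Fin 3 → ℂ)) = ⊤)
    (hsep : ∃ ε > 0, ∀ y ∈ ⇑fre '' (L : Set (Fin 3 → ℂ)), ‖y‖ < ε → y = 0) :
    ∃ w : Fin 3 → (Fin 3 → ℂ), (∀ i, w i ∈ L ∧ fre (w i) = 0) ∧ LinearIndependent ℝ w := by
  classical
  set GZ : Submodule ℤ (Fin 3 → ℝ) := Submodule.map (fre.restrictScalars ℤ) L with hGZ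
  have hGZcoe : (GZ : Set (Fin 3 → ℝ)) = ⇑fre '' (L : Set (Fin 3 → ℂ)) := by
    rw [hGZ, Submodule.map_coe]; rfl
  have hspanGZ : span ℝ (GZ : Set (Fin 3 → ℝ)) = ⊤ := by
    rw [hGZcoe, Submodule.span_image, hspanL, Submodule.map_top,
      LinearMap.range_eq_top.mpr fre_surj]
  haveI hdG : DiscreteTopology GZ := discrete_of_sep GZ (by rw [← hGZcoe] at hsep; exact hsep)
  haveI : IsZLattice ℝ GZ := ⟨hspanGZ⟩
  haveI : Module.Finite ℤ GZ := inferInstance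
  haveI : Module.Free ℤ GZ := inferInstance
  have hrk : finrank ℤ GZ = 3 := by rw [ZLattice.rank ℝ GZ]; simp
  set bG := Module.Free.chooseBasis ℤ GZ with hbG
  have hcard : Fintype.card (Module.Free.ChooseBasisIndex ℤ GZ) = 3 := by
    rw [← Module.finrank_eq_card_chooseBasisIndex]; exact hrk
  have hlift : ∀ i, ∃ x, x ∈ L ∧ fre x = (bG i : Fin 3 → ℝ) := by
    intro i
    obtain ⟨x, hx, he⟩ := Submodule.mem_map.mp (bG i).2
    exact ⟨x, hx, he⟩
  choose lam hlamL hlam using hlift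
  set K : Set (Fin 3 → ℂ) := {x | x ∈ L ∧ fre x = 0} with hK
  have hsub : (L : Set (Fin 3 → ℂ)) ⊆ ↑(span ℝ (Set.range lam) ⊔ span ℝ K) := by
    intro x hx
    set y : GZ := ⟨fre x, Submodule.mem_map.mpr ⟨x, hx, rfl⟩⟩ with hy
    set c := bG.repr y with hc
    set z := ∑ i, c i • lam i with hz
    have hzL : z ∈ L := Submodule.sum_mem _ fun i _ => L.smul_mem _ (hlamL i)
    have h1 : fre z = ∑ i, c i • (bG i : Fin 3 → ℝ) := by
      rw [hz, map_sum]
      exact Finset.sum_congr rfl fun i _ => by rw [map_zsmul, hlam i]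
    have h2 : fre x = ∑ i, c i • (bG i : Fin 3 → ℝ) := by
      have := congrArg (Subtype.val : GZ → (Fin 3 → ℝ)) (bG.sum_repr y).symm
      rw [Submodule.coe_sum] at this; simpa only [Submodule.coe_smul] using this
    have hfz : fre z = fre x := by rw [h1, h2]
    have hzsp : z ∈ span ℝ (Set.range lam) := by
      rw [hz]
      refine Submodule.sum_mem _ fun i _ => ?_
      rw [← Int.cast_smul_eq_zsmul ℝ]
      exact Submodule.smul_mem _ _ (subset_span (Set.mem_range_self i))
    have hxz : x - z ∈ K := ⟨L.sub_mem hx hzL, by rw [map_sub, hfz, sub_self]⟩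
    have : x = z + (x - z) := by ring
    rw [this]
    exact Submodule.add_mem _ (mem_sup_left hzsp) (mem_sup_right (subset_span hxz))
  have h1 : (⊤ : Submodule ℝ (Fin 3 → ℂ)) ≤ span ℝ (Set.range lam) ⊔ span ℝ K := by
    rw [← hspanL]; exact span_le.mpr hsub
  have h6 : 6 ≤ finrank ℝ ↥(span ℝ (Set.range lam) ⊔ span ℝ K) := by
    have hm : finrank ℝ (⊤ : Submodule ℝ (Fin 3 → ℂ)) ≤
        finrank ℝ ↥(span ℝ (Set.range lam) ⊔ span ℝ K) := Submodule.finrank_mono h1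
    rwa [finrank_top, finrank_dom] at hm
  have hsuple := Submodule.finrank_sup_add_finrank_inf_eq (span ℝ (Set.range lam)) (span ℝ K)
  have hlam3 : finrank ℝ (span ℝ (Set.range lam)) ≤ 3 := by
    have := finrank_range_le_card (R := ℝ) lam
    rwa [hcard] at this
  have hKrk : 3 ≤ finrank ℝ (span ℝ K) := by omega
  obtain ⟨w, hwmem, hwli⟩ := exists_indep_sub K 3 hKrk
  exact ⟨w, fun i => hwmem i, hwli⟩

end Aux

theorem stmt19 (Λ : AddSubgroup (Fin 3 → ℂ))
    (hΛ : ∃ b : Basis (Fin 6) ℝ (Fin 3 → ℂ),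
      (Λ : Set (Fin 3 → ℂ)) = AddSubgroup.closure (Set.range ⇑b)) :
    (∃ v : Fin 3 → (Fin 3 → ℝ),
      (∀ i, v i ∈ reMap '' (Λ : Set (Fin 3 → ℂ))) ∧
      LinearIndependent ℝ v) ∧
    (IsClosed (reMap '' (Λ : Set (Fin 3 → ℂ))) ↔
      ∃ w : Fin 3 → (Fin 3 → ℂ),
        (∀ i, w i ∈ Λ ∧ ∀ j, (w i j).re = 0) ∧
        LinearIndependent ℝ w) := by
  classical
  obtain ⟨b, hb⟩ := hΛ
  set L : Submodule ℤ (Fin 3 → ℂ) := span ℤ (Set.range ⇑b) with hLdef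
  have hcar : (Λ : Set (Fin 3 → ℂ)) = (L : Set (Fin 3 → ℂ)) := by
    rw [hb, ← Submodule.span_int_eq_addSubgroupClosure]; rfl
  haveI hdisc : DiscreteTopology L := inferInstance
  have hspanL : span ℝ (L : Set (Fin 3 → ℂ)) = ⊤ := ZSpan.span_top b
  have hre : reMap = ⇑fre := rfl
  have hS : reMap '' (Λ : Set (Fin 3 → ℂ)) = ⇑fre '' (L : Set (Fin 3 → ℂ)) := by
    rw [hre, hcar]
  have hspanS : span ℝ (⇑fre '' (L : Set (Fin 3 → ℂ))) = ⊤ := by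
    rw [Submodule.span_image, hspanL, Submodule.map_top, LinearMap.range_eq_top.mpr fre_surj]
  constructor
  · have h3 : 3 ≤ finrank ℝ (span ℝ (⇑fre '' (L : Set (Fin 3 → ℂ)))) := by
      rw [hspanS, finrank_top]; simp
    obtain ⟨v, hvmem, hvli⟩ := exists_indep_sub _ 3 h3
    exact ⟨v, fun i => by rw [hS]; exact hvmem i, hvli⟩
  · rw [hS]
    set GZ : Submodule ℤ (Fin 3 → ℝ) := Submodule.map (fre.restrictScalars ℤ) L with hGZ
    have hGZcoe : (GZ : Set (Fin 3 → ℝ)) = ⇑fre '' (L : Set (Fin 3 → ℂ)) := by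
      rw [hGZ, Submodule.map_coe]; rfl
    constructor
    · intro hcl
      haveI : IsZLattice ℝ L := ⟨hspanL⟩
      have hLcnt : (L : Set (Fin 3 → ℂ)).Countable := by
        haveI h : Countable L := inferInstance
        exact Set.countable_coe_iff.mp h
      obtain ⟨ε, hε, hsep⟩ := sep_of_closed_countable GZ
        (by rw [hGZcoe]; exact hcl) (by rw [hGZcoe]; exact hLcnt.image _)
      obtain ⟨w, hw, hwli⟩ := exists_w L hspanL
        ⟨ε, hε, fun y hy hn => hsep y (by rw [← SetLike.mem_coe, hGZcoe]; exact hy) hn⟩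
      refine ⟨w, fun i => ⟨?_, fun j => ?_⟩, hwli⟩
      · have : w i ∈ (Λ : Set (Fin 3 → ℂ)) := by rw [hcar]; exact (hw i).1
        exact this
      · have := congrFun (hw i).2 j
        simpa [fre] using this
    · rintro ⟨w, hw, hwli⟩
      have hwL : ∀ i, w i ∈ L := fun i => by
        rw [← SetLike.mem_coe, ← hcar]; exact (hw i).1
      have hwk : ∀ i, w i ∈ LinearMap.ker fre := fun i => by
        rw [LinearMap.mem_ker]; funext j; simpa [fre] using (hw i).2 j
      obtain ⟨ε, hε, hsep⟩ := sep_lemma L w hwL hwk hwli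
      haveI : DiscreteTopology GZ := discrete_of_sep GZ
        ⟨ε, hε, fun y hy hn => hsep y (by rw [← hGZcoe]; exact hy) hn⟩
      have := isClosed_of_disc GZ
      rwa [hGZcoe] at this
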